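/- The set of multiplicatively net-normal elements of {0,1}^ℕ has measure zero with respect to the Bernoulli measure λ: λ({x ∈ {0,1}^ℕ : x is (F_n)-normal in (ℕ,×) for every nice Følner sequence (F_n)}) = 0. -/

import Mathlib

open Filter MeasureTheory

/- `(F n)` is a Følner sequence in `(ℕ,×)` (positive integers under multiplication). -/
def MulFolner (F : ℕ → Finset ℕ) : Prop :=
  (∀ n, (F n).Nonempty) ∧ (∀ n, 0 ∉ F n) ∧
  ∀ k : ℕ, 0 < k → Tendsto
    (fun n => (((F n).filter (fun m => k * m ∈ F n)).card : ℝ) / (F n).card)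
    atTop (nhds 1)

/- A nice Følner sequence in `(ℕ,×)`. -/
def NiceFolner (F : ℕ → Finset ℕ) : Prop :=
  ∃ L : ℕ → ℕ, (∀ n, 0 < L n) ∧ (∀ n, L n ∣ L (n + 1)) ∧ (∀ n, L n ≠ L (n + 1)) ∧
    (∀ m : ℕ, 0 < m → ∀ᶠ n in atTop, m ∣ L n) ∧ (∀ n, F n = (L n).divisors)

/- `x : ℕ → {0,1}` is `(F n)`-normal in `(ℕ,×)`. -/
def MulNormalFun (F : ℕ → Finset ℕ) (x : ℕ → Bool) : Prop :=
  ∀ K : Finset ℕ, K.Nonempty → (∀ k ∈ K, 0 < k) → ∀ B : ℕ → Bool,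
    Tendsto
      (fun n => (((F n).filter (fun m => ∀ k ∈ K, x (k * m) = B k)).card : ℝ) / (F n).card)
      atTop (nhds ((1 / 2 : ℝ) ^ K.card))

/-!
If `x` is normal along every nice Følner sequence, then for some `M` it fails to be identically
`true` on the block `p · Div(M)` for every prime `p > M`. Otherwise pick such a prime `p` for `M`
and then `q` for `M p`: the blocks `p · Div(M)` and `q · Div(M p)` fill three quarters of the
divisors of `M p q`, so iterating `L ↦ (n + 1) L p q` yields a nice Følner sequence along which the
frequency of `true` stays at least `3/4` instead of tending to `1/2`.

For fixed `M` the blocks `p · Div(M)`, `p > M` prime, are pairwise disjoint, so under `λ` the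
events of failing on them are independent, each of probability `1 - 2^{-τ(M)} < 1`, and failing on
all of them is a null event.
-/

open Finset
open scoped ENNReal

lemma setOf_exists_false_subset_biUnion (S : Finset ℕ) :
    {x : ℕ → Bool | ∃ h ∈ S, x h = false} ⊆
      ⋃ T ∈ S.powerset.erase S, {x | ∀ h ∈ S, x h = decide (h ∈ T)} := by
  rintro x ⟨h₀, hh₀, hx₀⟩
  refine Set.mem_biUnion (x := S.filter (x · = true)) ?_ fun h hh => by simp [hh]
  refine mem_erase.2 ⟨fun hT => ?_, mem_powerset.2 (filter_subset _ _)⟩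
  have := hT ▸ hh₀
  simp [hx₀] at this

lemma natCast_two_pow_sub_one_mul_inv_two_pow (s : ℕ) :
    ((2 ^ s - 1 : ℕ) : ℝ≥0∞) * 2⁻¹ ^ s = 1 - 2⁻¹ ^ s := by
  rw [ENNReal.natCast_sub, ENNReal.sub_mul fun _ _ => by simp]
  push_cast
  rw [one_mul, ← mul_pow, ENNReal.mul_inv_cancel two_ne_zero ENNReal.ofNat_ne_top, one_pow]

theorem measure_forall_exists_false_inter_cylinder_le {ι : Type*} (μ : Measure (ℕ → Bool))
    (hμ : ∀ (K : Finset ℕ) (B : ℕ → Bool),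
      μ {x | ∀ h ∈ K, x h = B h} = (2 : ℝ≥0∞)⁻¹ ^ K.card)
    (S : ι → Finset ℕ) (I : Finset ι) (hS : (I : Set ι).PairwiseDisjoint S)
    (K : Finset ℕ) (hK : ∀ i ∈ I, Disjoint K (S i)) (B : ℕ → Bool) :
    μ {x | (∀ i ∈ I, ∃ h ∈ S i, x h = false) ∧ ∀ h ∈ K, x h = B h}
      ≤ (∏ i ∈ I, (1 - (2 : ℝ≥0∞)⁻¹ ^ (S i).card)) * 2⁻¹ ^ K.card := by
  classical
  induction I using Finset.induction_on generalizing K B with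
  | empty => simp [← hμ K B]
  | insert a I ha ih =>
    rw [coe_insert, Set.pairwiseDisjoint_insert] at hS
    have hKa : Disjoint K (S a) := hK a (mem_insert_self a I)
    have hKI : ∀ i ∈ I, Disjoint (K ∪ S a) (S i) := fun i hi =>
      disjoint_union_left.2
        ⟨hK i (mem_insert_of_mem hi), hS.2 i hi (ne_of_mem_of_not_mem hi ha).symm⟩
    -- split according to the pattern `T` of `true`s that `x` shows on the block `S a`
    let B' : Finset ℕ → ℕ → Bool := fun T h => if h ∈ S a then decide (h ∈ T) else B h
    have hcover :
        {x : ℕ → Bool | (∀ i ∈ insert a I, ∃ h ∈ S i, x h = false) ∧ ∀ h ∈ K, x h = B h} ⊆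
        ⋃ T ∈ (S a).powerset.erase (S a),
          {x | (∀ i ∈ I, ∃ h ∈ S i, x h = false) ∧ ∀ h ∈ K ∪ S a, x h = B' T h} := by
      rintro x ⟨hxI, hxK⟩
      obtain ⟨T, hT, hxT⟩ := Set.mem_iUnion₂.1
        (setOf_exists_false_subset_biUnion (S a) (hxI a (mem_insert_self a I)))
      refine Set.mem_biUnion hT ⟨fun i hi => hxI i (mem_insert_of_mem hi), fun h hh => ?_⟩
      by_cases hha : h ∈ S a
      · simpa [B', hha] using hxT h hha
      · simpa [B', hha] using hxK h ((mem_union.1 hh).resolve_right hha)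
    calc _ ≤ ∑ T ∈ (S a).powerset.erase (S a),
            μ {x | (∀ i ∈ I, ∃ h ∈ S i, x h = false) ∧ ∀ h ∈ K ∪ S a, x h = B' T h} :=
          (measure_mono hcover).trans (measure_biUnion_finset_le _ _)
      _ ≤ ∑ T ∈ (S a).powerset.erase (S a),
            (∏ i ∈ I, (1 - (2 : ℝ≥0∞)⁻¹ ^ (S i).card)) * 2⁻¹ ^ (K.card + (S a).card) :=
          sum_le_sum fun T _ => card_union_of_disjoint hKa ▸ ih hS.1 (K ∪ S a) hKI (B' T)
      _ = _ := by
          rw [sum_const, card_erase_of_mem (mem_powerset_self _), card_powerset, nsmul_eq_mul,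
            prod_insert ha, pow_add, ← natCast_two_pow_sub_one_mul_inv_two_pow]
          ring

lemma pairwiseDisjoint_image_mul_divisors (M : ℕ) :
    {p : ℕ | p.Prime ∧ M < p}.PairwiseDisjoint fun p => M.divisors.image (p * ·) := by
  rintro p ⟨hp, hMp⟩ q ⟨hq, -⟩ hpq
  refine disjoint_left.2 fun m hmp hmq => ?_
  obtain ⟨d, hd, rfl⟩ := mem_image.1 hmp
  obtain ⟨e, he, hde⟩ := mem_image.1 hmq
  have hpe : p ∣ q * e := hde ▸ dvd_mul_right p d
  rcases hp.dvd_mul.1 hpe with hpq' | hpe'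
  · exact hpq ((Nat.prime_dvd_prime_iff_eq hp hq).1 hpq')
  · exact (Nat.le_of_dvd (Nat.pos_of_mem_divisors he) hpe').not_gt
      ((Nat.divisor_le he).trans_lt hMp)

theorem measure_forall_prime_exists_false_eq_zero (μ : Measure (ℕ → Bool))
    (hμ : ∀ (K : Finset ℕ) (B : ℕ → Bool),
      μ {x | ∀ h ∈ K, x h = B h} = (2 : ℝ≥0∞)⁻¹ ^ K.card) (M : ℕ) :
    μ {x | ∀ p, p.Prime → M < p → ∃ d ∈ M.divisors, x (p * d) = false} = 0 := by
  set r : ℝ≥0∞ := 1 - 2⁻¹ ^ M.divisors.card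
  have hr : r < 1 := ENNReal.sub_lt_self ENNReal.one_ne_top one_ne_zero (by simp)
  have hle (k : ℕ) :
      μ {x | ∀ p, p.Prime → M < p → ∃ d ∈ M.divisors, x (p * d) = false} ≤ r ^ k := by
    obtain ⟨P, hP, rfl⟩ :=
      (Nat.infinite_setOfPred_prime.sdiff (Set.finite_le_nat M)).exists_subset_card_eq k
    have hP' : (P : Set ℕ) ⊆ {p | p.Prime ∧ M < p} := fun p hp => by simpa using hP hp
    calc _ ≤ μ {x | (∀ p ∈ P, ∃ h ∈ M.divisors.image (p * ·), x h = false) ∧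
            ∀ h ∈ (∅ : Finset ℕ), x h = true} := by
          refine measure_mono fun x hx => ⟨fun p hp => ?_, by simp⟩
          obtain ⟨d, hd, hxd⟩ := hx p (hP' hp).1 (hP' hp).2
          exact ⟨p * d, mem_image_of_mem _ hd, hxd⟩
      _ ≤ (∏ p ∈ P, (1 - (2 : ℝ≥0∞)⁻¹ ^ (M.divisors.image (p * ·)).card)) *
            2⁻¹ ^ (∅ : Finset ℕ).card :=
          measure_forall_exists_false_inter_cylinder_le μ hμ _ P
            ((pairwiseDisjoint_image_mul_divisors M).subset hP') ∅ (by simp) _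
      _ = r ^ P.card := by
          rw [card_empty, pow_zero, mul_one, ← prod_const]
          refine prod_congr rfl fun p hp => ?_
          rw [card_image_of_injective _ (mul_right_injective₀ (hP' hp).1.ne_zero)]
  exact le_antisymm (ge_of_tendsto' (ENNReal.tendsto_pow_atTop_nhds_zero_of_lt_one hr) hle)
    bot_le

lemma card_divisors_mul_prime {n p : ℕ} (hp : p.Prime) (hpn : ¬p ∣ n) :
    (n * p).divisors.card = 2 * n.divisors.card := by
  rw [Nat.Coprime.card_divisors_mul ((hp.coprime_iff_not_dvd.2 hpn).symm), hp.divisors,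
    card_pair hp.one_lt.ne, mul_comm]

lemma three_mul_card_divisors_le_four_mul_card_filter {x : ℕ → Bool} {M p q : ℕ} (hM : 0 < M)
    (hp : p.Prime) (hMp : M < p) (hq : q.Prime) (hMpq : M * p < q)
    (hxp : ∀ d ∈ M.divisors, x (p * d) = true)
    (hxq : ∀ d ∈ (M * p).divisors, x (q * d) = true) :
    3 * (M * p * q).divisors.card ≤ 4 * ((M * p * q).divisors.filter (x · = true)).card := by
  have hMp0 : 0 < M * p := Nat.mul_pos hM hp.pos
  have hcardMp := card_divisors_mul_prime hp fun h => (Nat.le_of_dvd hM h).not_gt hMp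
  have hcard := card_divisors_mul_prime hq fun h => (Nat.le_of_dvd hMp0 h).not_gt hMpq
  have hne : M * p * q ≠ 0 := (Nat.mul_pos hMp0 hq.pos).ne'
  set A := M.divisors.image (p * ·)
  set C := (M * p).divisors.image (q * ·)
  -- every element of `A` is at most `p M < q`, every element of `C` is at least `q`
  have hAC : Disjoint A C := by
    refine disjoint_left.2 fun m hmA hmC => ?_
    obtain ⟨d, hd, rfl⟩ := mem_image.1 hmA
    obtain ⟨e, he, hde⟩ := mem_image.1 hmC
    have hpd : p * d < q :=
      (Nat.mul_le_mul_left p (Nat.divisor_le hd)).trans_lt (mul_comm M p ▸ hMpq)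
    have hqe : q ≤ q * e := Nat.le_mul_of_pos_right q (Nat.pos_of_mem_divisors he)
    omega
  have hsub : A ∪ C ⊆ (M * p * q).divisors.filter (x · = true) := by
    intro m hm
    rcases mem_union.1 hm with hm | hm
    · obtain ⟨d, hd, rfl⟩ := mem_image.1 hm
      refine mem_filter.2 ⟨Nat.mem_divisors.2 ⟨Dvd.dvd.mul_right ?_ q, hne⟩, hxp d hd⟩
      rw [mul_comm p d]
      exact mul_dvd_mul_right (Nat.dvd_of_mem_divisors hd) p
    · obtain ⟨e, he, rfl⟩ := mem_image.1 hm
      refine mem_filter.2 ⟨Nat.mem_divisors.2 ⟨?_, hne⟩, hxq e he⟩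
      rw [mul_comm q e]
      exact mul_dvd_mul_right (Nat.dvd_of_mem_divisors he) q
  have hcardAC : (A ∪ C).card = 3 * M.divisors.card := by
    rw [card_union_of_disjoint hAC, card_image_of_injective _ (mul_right_injective₀ hp.ne_zero),
      card_image_of_injective _ (mul_right_injective₀ hq.ne_zero), hcardMp]
    ring
  have := card_le_card hsub
  omega

lemma niceFolner_divisors {L : ℕ → ℕ} (hpos : ∀ n, 0 < L n) (hdvd : ∀ n, L n ∣ L (n + 1))
    (hlt : ∀ n, L n < L (n + 1)) (hsucc : ∀ n, n + 1 ∣ L (n + 1)) :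
    NiceFolner fun n => (L n).divisors := by
  refine ⟨L, hpos, hdvd, fun n => (hlt n).ne, fun m hm => ?_, fun n => rfl⟩
  obtain ⟨k, rfl⟩ := Nat.exists_eq_succ_of_ne_zero hm.ne'
  filter_upwards [eventually_ge_atTop (k + 1)] with n hn
  exact (hsucc k).trans (Nat.rel_of_forall_rel_succ_of_le (· ∣ ·) hdvd hn)

lemma not_mulNormalFun_of_frequently_le {F : ℕ → Finset ℕ} {x : ℕ → Bool} {c : ℝ} (hc : 1 / 2 < c)
    (h : ∃ᶠ n in atTop, c ≤ (((F n).filter (x · = true)).card : ℝ) / (F n).card) :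
    ¬MulNormalFun F x := by
  intro hx
  have h1 := hx {1} (singleton_nonempty 1) (by simp) fun _ => true
  simp only [mem_singleton, forall_eq, one_mul, card_singleton, pow_one] at h1
  obtain ⟨n, hcn, hnc⟩ := (h.and_eventually (h1.eventually (gt_mem_nhds hc))).exists
  exact hcn.not_gt hnc

def twoPrimeStep (f : ℕ → ℕ) (M : ℕ) : ℕ := M * f M * f (M * f M)

def twoPrimeTower (f : ℕ → ℕ) : ℕ → ℕ
  | 0 => 1
  | n + 1 => twoPrimeStep f (twoPrimeTower f n * (n + 1))

lemma lt_twoPrimeStep {f : ℕ → ℕ} (hf : ∀ M, M < f M) {M : ℕ} (hM : 0 < M) :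
    M < twoPrimeStep f M :=
  calc M < M * f M := lt_mul_right hM (Nat.lt_of_le_of_lt hM (hf M))
    _ ≤ twoPrimeStep f M := Nat.le_mul_of_pos_right _ ((Nat.zero_le _).trans_lt (hf _))

lemma twoPrimeTower_pos {f : ℕ → ℕ} (hf : ∀ M, M < f M) (n : ℕ) : 0 < twoPrimeTower f n := by
  induction n with
  | zero => exact one_pos
  | succ n ih =>
    have hM := Nat.mul_pos ih n.succ_pos
    exact hM.trans (lt_twoPrimeStep hf hM)

lemma niceFolner_divisors_twoPrimeTower {f : ℕ → ℕ} (hf : ∀ M, M < f M) :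
    NiceFolner fun n => (twoPrimeTower f n).divisors := by
  have hpos := twoPrimeTower_pos hf
  have hdvd (n : ℕ) : twoPrimeTower f n * (n + 1) ∣ twoPrimeTower f (n + 1) :=
    (dvd_mul_right _ _).mul_right _
  refine niceFolner_divisors hpos (fun n => (dvd_mul_right _ _).trans (hdvd n)) (fun n => ?_)
    fun n => (dvd_mul_left _ _).trans (hdvd n)
  calc twoPrimeTower f n ≤ twoPrimeTower f n * (n + 1) := Nat.le_mul_of_pos_right _ n.succ_pos
    _ < _ := lt_twoPrimeStep hf (Nat.mul_pos (hpos n) n.succ_pos)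

lemma exists_niceFolner_not_mulNormalFun {x : ℕ → Bool}
    (hx : ∀ M, ∃ p, p.Prime ∧ M < p ∧ ∀ d ∈ M.divisors, x (p * d) = true) :
    ∃ F, NiceFolner F ∧ ¬MulNormalFun F x := by
  choose f hfp hfM hfx using hx
  refine ⟨_, niceFolner_divisors_twoPrimeTower hfM,
    not_mulNormalFun_of_frequently_le (c := 3 / 4) (by norm_num) ?_⟩
  refine frequently_atTop.2 fun N => ⟨N + 1, N.le_succ, ?_⟩
  set M := twoPrimeTower f N * (N + 1)
  have hM : 0 < M := Nat.mul_pos (twoPrimeTower_pos hfM N) N.succ_pos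
  have h34 := three_mul_card_divisors_le_four_mul_card_filter hM (hfp M) (hfM M) (hfp _) (hfM _)
    (hfx M) (hfx _)
  change (3 / 4 : ℝ) ≤ (((twoPrimeStep f M).divisors.filter (x · = true)).card : ℝ) /
    (twoPrimeStep f M).divisors.card
  have hcard : (0 : ℝ) < (twoPrimeStep f M).divisors.card := by
    exact_mod_cast card_pos.2 (Nat.nonempty_divisors.2 (twoPrimeTower_pos hfM (N + 1)).ne')
  rw [le_div_iff₀ hcard]
  have : (3 : ℝ) * (twoPrimeStep f M).divisors.card ≤
      4 * ((twoPrimeStep f M).divisors.filter (x · = true)).card := by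
    exact_mod_cast h34
  linarith

/-- The set of multiplicatively net-normal elements of `{0,1}^ℕ` has measure zero
with respect to the Bernoulli measure `λ = μ` (the `(1/2,1/2)`-product measure on
`{0,1}^ℕ`, characterized by its values on cylinder sets). -/
theorem net_normal_measure_zero
    (μ : Measure (ℕ → Bool))
    (hμ : ∀ (K : Finset ℕ) (B : ℕ → Bool),
      μ {x | ∀ h ∈ K, x h = B h} = (2 : ENNReal)⁻¹ ^ K.card) :
    μ {x : ℕ → Bool | ∀ F : ℕ → Finset ℕ, NiceFolner F → MulNormalFun F x} = 0 := by
  refine measure_mono_null (fun x hx => ?_)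
    (measure_iUnion_null (measure_forall_prime_exists_false_eq_zero μ hμ))
  by_contra hgood
  obtain ⟨F, hF, hFx⟩ := exists_niceFolner_not_mulNormalFun fun M => by
    simpa using not_exists.1 (Set.mem_iUnion.not.1 hgood) M
  exact hFx (hx F hF)
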